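/- Every two-player social network game has the finite improvement property. -/

import Mathlib

open Finset

/-- A social network: a finite weighted directed graph together with product
assignments and thresholds.  `nbr i` is the set `N(i)` of in-neighbours of `i`. -/
structure SN (V P : Type) [Fintype V] [DecidableEq V] [DecidableEq P] where
  nbr : V → Finset V
  w : V → V → ℝ
  prod : V → Finset P
  θ : V → P → ℝ
  no_self : ∀ i, i ∉ nbr i
  w_nonneg : ∀ i j, 0 ≤ w i j
  w_le_one : ∀ i j, w i j ≤ 1
  sum_w_le_one : ∀ i, (nbr i).Nonempty → ∑ j ∈ nbr i, w j i ≤ 1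
  prod_nonempty : ∀ i, (prod i).Nonempty
  θ_pos : ∀ i t, 0 < θ i t
  θ_le_one : ∀ i t, θ i t ≤ 1

variable {V P : Type} [Fintype V] [DecidableEq V] [DecidableEq P]

/-- A source node: a node with no incoming edges. -/
def SN.isSource (S : SN V P) (i : V) : Prop := S.nbr i = ∅

/-- The payoff of player `i` in the joint strategy `s` (`none` is the null strategy `t₀`,
`c0 > 0` is the constant payoff of source nodes adopting a product). -/
def SN.payoff (S : SN V P) (c0 : ℝ) (s : V → Option P) (i : V) : ℝ :=
  match s i with
  | none => 0
  | some t =>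
      if S.nbr i = ∅ then c0
      else (∑ j ∈ (S.nbr i).filter (fun j => s j = some t), S.w j i) - S.θ i t

/-- A joint strategy is valid if every player only uses products from his product set. -/
def SN.valid (S : SN V P) (s : V → Option P) : Prop :=
  ∀ i t, s i = some t → t ∈ S.prod i

/-- The strategy `a` belongs to the strategy set `P(i) ∪ {t₀}` of player `i`. -/
def SN.allowed (S : SN V P) (i : V) (a : Option P) : Prop :=
  ∀ t, a = some t → t ∈ S.prod i

/-- (Pure) Nash equilibrium of the social network game. -/
def SN.NE (S : SN V P) (c0 : ℝ) (s : V → Option P) : Prop :=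
  S.valid s ∧ ∀ i a, S.allowed i a →
    S.payoff c0 (Function.update s i a) i ≤ S.payoff c0 s i

/-- One improvement step: some player deviates to a strategy from his strategy
set that strictly increases his payoff. -/
def SN.ImpStep (S : SN V P) (c0 : ℝ) (s s' : V → Option P) : Prop :=
  ∃ i a, S.allowed i a ∧ a ≠ s i ∧ s' = Function.update s i a ∧
    S.payoff c0 s i < S.payoff c0 s' i

/-- The finite improvement property: every improvement path is finite, i.e. there
is no infinite sequence of improvement steps (starting from a valid joint strategy). -/
def SN.FIP (S : SN V P) (c0 : ℝ) : Prop :=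
  ¬ ∃ ρ : ℕ → (V → Option P), S.valid (ρ 0) ∧ ∀ k, S.ImpStep c0 (ρ k) (ρ (k + 1))

/-!
Each player's payoff has the form `α i * m s - c i (s i)` with `α i ≥ 0`, where `m s ∈ {0, 1}`
records whether both players adopted the same product and `c i` depends on `i`'s own strategy
only. A player with `α i = 0` improves only by lowering his own cost, and a player with
`α i > 0` improves exactly when `m s - c i (s i) / α i` grows. So the pair
(`-∑_{α i = 0} c i (s i)`, `m s - ∑ c i (s i) / α i`) increases lexicographically along every
improvement step; since there are finitely many valid joint strategies, every improvement path
is finite.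
-/

open Function

section LexPotential

variable {ι σ : Type*} [Fintype ι] [DecidableEq ι]

theorem sum_apply_update_sub (f : ι → σ → ℝ) (s : ι → σ) (i : ι) (a : σ) :
    ∑ j, f j (update s i a j) - ∑ j, f j (s j) = f i a - f i (s i) := by
  have hupd : (fun j => f j (update s i a j)) = update (fun k => f k (s k)) i (f i a) :=
    funext (apply_update f s i a)
  rw [hupd, sum_update_of_mem (mem_univ i), ← add_sum_erase _ _ (mem_univ i),
    sdiff_singleton_eq_erase]
  ring

/-- Players with `α j = 0` enter the second component as `c j (s j) / 0 = 0`. -/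
noncomputable def lexPotential (α : ι → ℝ) (m : (ι → σ) → ℝ) (c : ι → σ → ℝ) (s : ι → σ) :
    ℝ ×ₗ ℝ :=
  toLex (-∑ j, (if α j = 0 then c j (s j) else 0), m s - ∑ j, c j (s j) / α j)

theorem lexPotential_lt_update {α : ι → ℝ} {m : (ι → σ) → ℝ} {c : ι → σ → ℝ} {s : ι → σ}
    {i : ι} {a : σ} (hα : 0 ≤ α i)
    (hlt : α i * m s - c i (s i) < α i * m (update s i a) - c i a) :
    lexPotential α m c s < lexPotential α m c (update s i a) := by
  have hfst := sum_apply_update_sub (fun j x => if α j = 0 then c j x else 0) s i a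
  have hsnd := sum_apply_update_sub (fun j x => c j x / α j) s i a
  rw [lexPotential, lexPotential, Prod.Lex.toLex_lt_toLex]
  dsimp only
  rcases hα.eq_or_lt with hα0 | hαpos
  · rw [← hα0] at hlt hfst
    simp only [if_true] at hfst
    left
    linarith
  · simp only [if_neg hαpos.ne'] at hfst
    have hdiv : m s - c i (s i) / α i < m (update s i a) - c i a / α i := by
      rw [← mul_lt_mul_iff_of_pos_left hαpos]
      field_simp
      linarith
    right
    constructor <;> linarith

end LexPotential

theorem Fin.eq_or_eq_rev_of_two (i k : Fin 2) : k = i ∨ k = i.rev := by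
  revert i k
  decide

namespace SN

theorem finite_setOf_valid (S : SN V P) : {s | S.valid s}.Finite := by
  have hallowed (i : V) : {a | S.allowed i a}.Finite := by
    refine (insert none ((S.prod i).image some)).finite_toSet.subset fun a ha => ?_
    cases a with
    | none => simp
    | some t => simpa using ha t rfl
  exact (Set.Finite.pi hallowed).subset fun s hs i _ t => hs i t

theorem ImpStep.valid {S : SN V P} {c0 : ℝ} {s s' : V → Option P} (h : S.ImpStep c0 s s')
    (hs : S.valid s) : S.valid s' := by
  obtain ⟨i, a, ha, -, rfl, -⟩ := h
  intro j t hjt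
  rcases eq_or_ne j i with rfl | hji
  · exact ha t (by simpa using hjt)
  · exact hs j t (by simpa [hji] using hjt)

/-- `f` is a generalized ordinal potential in the sense of Monderer and Shapley. -/
theorem fip_of_potential {β : Type*} [Preorder β] (S : SN V P) (c0 : ℝ)
    (f : (V → Option P) → β) (hf : ∀ s s', S.ImpStep c0 s s' → f s < f s') : S.FIP c0 := by
  rintro ⟨ρ, hρ0, hρ⟩
  have hvalid (k : ℕ) : S.valid (ρ k) :=
    Nat.rec hρ0 (fun k hk => (hρ k).valid hk) k
  have hinj : Injective ρ :=
    (strictMono_nat_of_lt_succ fun k => hf _ _ (hρ k)).injective.of_comp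
  exact Set.infinite_range_of_injective hinj
    (S.finite_setOf_valid.subset (Set.range_subset_iff.2 hvalid))

def coordinated (s : V → Option P) : Prop :=
  ∃ t, ∀ i, s i = some t

noncomputable def cost (S : SN V P) (c0 : ℝ) (i : V) : Option P → ℝ
  | none => 0
  | some t => if S.nbr i = ∅ then -c0 else S.θ i t

noncomputable def coordWeight (S : SN (Fin 2) P) (i : Fin 2) : ℝ :=
  if S.nbr i = ∅ then 0 else S.w i.rev i

theorem coordWeight_nonneg (S : SN (Fin 2) P) (i : Fin 2) : 0 ≤ S.coordWeight i := by
  unfold coordWeight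
  split_ifs
  exacts [le_rfl, S.w_nonneg _ _]

theorem nbr_eq_empty_or_eq_rev (S : SN (Fin 2) P) (i : Fin 2) :
    S.nbr i = ∅ ∨ S.nbr i = {i.rev} := by
  refine subset_singleton_iff.1 fun j hj => mem_singleton.2 ?_
  have hji : j ≠ i := fun h => S.no_self i (h ▸ hj)
  exact (Fin.eq_or_eq_rev_of_two i j).resolve_left hji

omit [DecidableEq P] in
theorem coordinated_iff_rev {s : Fin 2 → Option P} {i : Fin 2} {t : P} (hs : s i = some t) :
    coordinated s ↔ s i.rev = some t := by
  constructor
  · rintro ⟨t', ht'⟩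
    obtain rfl : t' = t := Option.some_injective _ ((ht' i).symm.trans hs)
    exact ht' i.rev
  · intro hrev
    refine ⟨t, fun k => ?_⟩
    rcases Fin.eq_or_eq_rev_of_two i k with rfl | rfl
    exacts [hs, hrev]

open Classical in
theorem payoff_eq (S : SN (Fin 2) P) (c0 : ℝ) (s : Fin 2 → Option P) (i : Fin 2) :
    S.payoff c0 s i =
      S.coordWeight i * (if coordinated s then 1 else 0) - S.cost c0 i (s i) := by
  unfold payoff cost coordWeight
  cases hs : s i with
  | none =>
    have : ¬ coordinated s := fun ⟨t, ht⟩ => Option.some_ne_none t ((ht i).symm.trans hs)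
    simp [this]
  | some t =>
    rcases S.nbr_eq_empty_or_eq_rev i with hn | hn
    · simp [hn]
    · simp only [hn, singleton_ne_empty, if_false, filter_singleton, coordinated_iff_rev hs]
      split_ifs <;> simp

end SN

theorem fip_of_two_players_general (S : SN (Fin 2) P) (c0 : ℝ) :
    S.FIP c0 := by
  classical
  refine S.fip_of_potential c0
    (lexPotential S.coordWeight (fun s => if SN.coordinated s then 1 else 0) (S.cost c0)) ?_
  rintro s _ ⟨i, a, -, -, rfl, hlt⟩
  refine lexPotential_lt_update (S.coordWeight_nonneg i) ?_
  simpa only [S.payoff_eq, update_self] using hlt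

/-- every two-player social network game has the finite improvement
property. -/
theorem fip_of_two_players (S : SN (Fin 2) P) (c0 : ℝ) (hc0 : 0 < c0) :
    S.FIP c0 :=
  fip_of_two_players_general S c0
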